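/- Let γ : ℝ^n → ℝ be a continuous conditionally negative definite function with γ ≥ 0, and let f : [0, ∞) → ℝ be a Bernstein function, i.e. f(λ) = bλ + ∫_{(0,∞)} (1 − e^{−sλ}) μ(ds) for some b ≥ 0 and some measure μ on (0, ∞) satisfying ∫_{(0,∞)} s/(1+s) μ(ds) < ∞. Then the composition f ∘ γ : ℝ^n → ℝ is a continuous conditionally negative definite function. -/

import Mathlib

open MeasureTheory

/-- A function `γ : E → ℝ` on an additive group `E` is conditionally negative definite
(a variogram) if `γ 0 = 0`, `γ (-η) = γ η` for all `η`, and for every `m`, all points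
`x₁, …, xₘ ∈ E` and all real weights `λ₁, …, λₘ` summing to `0`, one has
`∑ᵢ ∑ⱼ λᵢ λⱼ γ (xᵢ - xⱼ) ≤ 0`. -/
def IsCondNegDefFun {E : Type*} [AddCommGroup E] (γ : E → ℝ) : Prop :=
  γ 0 = 0 ∧ (∀ η, γ (-η) = γ η) ∧
    ∀ (n : ℕ) (x : Fin n → E) (lam : Fin n → ℝ), (∑ i, lam i) = 0 →
      ∑ i, ∑ j, lam i * lam j * γ (x i - x j) ≤ 0

/-- `f : ℝ → ℝ` is a Bernstein function (on `[0, ∞)`) if there are `b ≥ 0` and a measure `μ`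
on `(0, ∞)` with `∫ s/(1+s) μ(ds) < ∞` such that
`f(λ) = bλ + ∫_{(0,∞)} (1 − e^{−sλ}) μ(ds)` for all `λ ≥ 0`. -/
def IsBernstein (f : ℝ → ℝ) : Prop :=
  ∃ (b : ℝ) (μ : Measure ℝ), 0 ≤ b ∧
    (∫⁻ s in Set.Ioi (0 : ℝ), ENNReal.ofReal (s / (1 + s)) ∂μ) < ⊤ ∧
    ∀ l : ℝ, 0 ≤ l →
      f l = b * l + ∫ s in Set.Ioi (0 : ℝ), (1 - Real.exp (-(s * l))) ∂μ

/-!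
Adjoining the point `0` with weight `-∑ vᵢ` to a family `xᵢ` with weights `vᵢ` shows that, for a
conditionally negative definite `γ`, the kernel `γ x + γ y - γ (x - y)` is positive semidefinite.
By the Schur product theorem so are its entrywise powers, hence its entrywise exponential, and
conjugating by the diagonal matrix `exp (-t γ xᵢ)` gives Schoenberg's theorem: `exp (-t γ (x - y))`
is positive semidefinite for `t ≥ 0`. Thus every `1 - exp (-t γ)` is conditionally negative
definite, and so is `f ∘ γ = b γ + ∫ (1 - exp (-s γ)) dμ(s)`, the class being a convex cone closed
under integration. Continuity follows by dominated convergence from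
`|1 - exp (-s l)| ≤ 2 (1 + M) s / (1 + s)` for `0 ≤ l ≤ M`, integrable against `μ`.
-/

namespace Matrix

variable {ι : Type*} [Fintype ι]

lemma star_dotProduct_mulVec_eq_sum (M : Matrix ι ι ℝ) (v : ι → ℝ) :
    star v ⬝ᵥ M *ᵥ v = ∑ i, ∑ j, v i * v j * M i j := by
  simp [dotProduct, mulVec, Finset.mul_sum, mul_comm, mul_left_comm]

lemma posSemidef_of_sum_nonneg {M : Matrix ι ι ℝ} (hM : ∀ i j, M i j = M j i)
    (h : ∀ v : ι → ℝ, 0 ≤ ∑ i, ∑ j, v i * v j * M i j) : M.PosSemidef :=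
  posSemidef_iff_dotProduct_mulVec.2
    ⟨IsHermitian.ext fun i j => by simp [hM i j], fun v => by
      rw [star_dotProduct_mulVec_eq_sum]; exact h v⟩

lemma PosSemidef.sum_nonneg {M : Matrix ι ι ℝ} (hM : M.PosSemidef) (v : ι → ℝ) :
    0 ≤ ∑ i, ∑ j, v i * v j * M i j :=
  star_dotProduct_mulVec_eq_sum M v ▸ hM.dotProduct_mulVec_nonneg v

lemma PosSemidef.map_pow {A : Matrix ι ι ℝ} (hA : A.PosSemidef) (k : ℕ) :
    (A.map (· ^ k)).PosSemidef := by
  induction k with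
  | zero =>
    have : A.map (· ^ 0) = vecMulVec 1 (star 1) := by ext; simp [vecMulVec]
    exact this ▸ posSemidef_vecMulVec_self_star 1
  | succ k ih =>
    have : A.map (· ^ (k + 1)) = A.map (· ^ k) ⊙ A := by ext; simp [pow_succ]
    exact this ▸ ih.hadamard hA

lemma PosSemidef.map_exp {A : Matrix ι ι ℝ} (hA : A.PosSemidef) :
    (A.map Real.exp).PosSemidef := by
  refine posSemidef_iff_dotProduct_mulVec.2
    ⟨hA.isHermitian.map _ fun _ => rfl, fun v => ?_⟩
  have hexp : HasSum (fun k : ℕ => (k.factorial : ℝ)⁻¹ • A.map (· ^ k)) (A.map Real.exp) :=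
    Pi.hasSum.2 fun i => Pi.hasSum.2 fun j => by
      simpa [Real.exp_eq_exp_ℝ, div_eq_inv_mul] using
        NormedSpace.expSeries_div_hasSum_exp (A i j)
  let q : Matrix ι ι ℝ →+ ℝ :=
    AddMonoidHom.mk' (fun M => star v ⬝ᵥ M *ᵥ v) fun M N => by simp [add_mulVec]
  have hq : Continuous q := show Continuous fun M : Matrix ι ι ℝ => star v ⬝ᵥ M *ᵥ v by fun_prop
  refine (hexp.map q hq).nonneg fun k => ?_
  simpa [q, smul_mulVec, dotProduct_smul] using
    mul_nonneg (by positivity) ((hA.map_pow k).dotProduct_mulVec_nonneg v)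

end Matrix

namespace IsCondNegDefFun

variable {E : Type*} [AddCommGroup E] {γ : E → ℝ}

lemma apply_sub_comm (hγ : IsCondNegDefFun γ) (a b : E) : γ (a - b) = γ (b - a) := by
  rw [← neg_sub, hγ.2.1]

lemma posSemidef_centered (hγ : IsCondNegDefFun γ) {m : ℕ} (x : Fin m → E) :
    (Matrix.of fun i j => γ (x i) + γ (x j) - γ (x i - x j)).PosSemidef := by
  refine Matrix.posSemidef_of_sum_nonneg
    (fun i j => by simp only [Matrix.of_apply, hγ.apply_sub_comm (x i)]; ring) fun v => ?_
  have h := hγ.2.2 (m + 1) (Fin.cons 0 x) (Fin.cons (-∑ i, v i) v) (by simp [Fin.sum_cons])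
  simp only [Fin.sum_univ_succ, Fin.cons_zero, Fin.cons_succ, sub_zero, zero_sub,
    hγ.1, hγ.2.1, mul_zero, zero_add, Finset.sum_add_distrib] at h
  simp_rw [mul_comm (v _) (-_), mul_assoc, ← Finset.mul_sum] at h
  -- both sides are now linear in `∑ vᵢ * ∑ vᵢ γ xᵢ` and `∑ᵢ ∑ⱼ vᵢ vⱼ γ (xᵢ - xⱼ)`
  simp only [Matrix.of_apply, mul_add, mul_sub, Finset.sum_add_distrib, Finset.sum_sub_distrib]
  simp_rw [mul_right_comm (v _) (v _) (γ (x _)), ← Finset.mul_sum, ← Finset.sum_mul, mul_assoc,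
    ← Finset.mul_sum, ← Finset.sum_mul, mul_comm (γ _) (v _)]
  linarith

open Matrix in
lemma posSemidef_exp_neg_mul (hγ : IsCondNegDefFun γ) {m : ℕ} (x : Fin m → E) {t : ℝ}
    (ht : 0 ≤ t) : (of fun i j => Real.exp (-(t * γ (x i - x j)))).PosSemidef := by
  let d i := Real.exp (-(t * γ (x i)))
  have h : (of fun i j => Real.exp (-(t * γ (x i - x j)))) = diagonal d *
      (t • of fun i j => γ (x i) + γ (x j) - γ (x i - x j)).map Real.exp * (diagonal d)ᴴ := by
    ext i j
    simp only [d, of_apply, diagonal_conjTranspose, diagonal_mul, mul_diagonal, map_apply,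
      Matrix.smul_apply, smul_eq_mul, star_trivial, ← Real.exp_add]
    ring_nf
  rw [h]
  exact ((hγ.posSemidef_centered x).smul ht).map_exp.mul_mul_conjTranspose_same _

lemma one_sub_exp_neg_mul (hγ : IsCondNegDefFun γ) {t : ℝ} (ht : 0 ≤ t) :
    IsCondNegDefFun fun η => 1 - Real.exp (-(t * γ η)) := by
  refine ⟨by simp [hγ.1], fun η => by simp [hγ.2.1], fun m x lam hlam => ?_⟩
  have h := (hγ.posSemidef_exp_neg_mul x ht).sum_nonneg lam
  simp only [Matrix.of_apply] at h
  simp only [mul_sub, mul_one, Finset.sum_sub_distrib, ← Finset.sum_mul_sum, hlam, mul_zero]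
  linarith

lemma const_mul (hγ : IsCondNegDefFun γ) {c : ℝ} (hc : 0 ≤ c) :
    IsCondNegDefFun fun η => c * γ η := by
  refine ⟨by simp [hγ.1], fun η => by simp [hγ.2.1], fun m x lam hlam => ?_⟩
  have h := mul_nonpos_iff.2 (Or.inl ⟨hc, hγ.2.2 m x lam hlam⟩)
  simpa only [Finset.mul_sum, mul_left_comm c] using h

lemma add {δ : E → ℝ} (hγ : IsCondNegDefFun γ) (hδ : IsCondNegDefFun δ) :
    IsCondNegDefFun fun η => γ η + δ η := by
  refine ⟨by simp [hγ.1, hδ.1], fun η => by simp [hγ.2.1, hδ.2.1], fun m x lam hlam => ?_⟩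
  simpa only [mul_add, Finset.sum_add_distrib] using
    add_nonpos (hγ.2.2 m x lam hlam) (hδ.2.2 m x lam hlam)

lemma integral {α : Type*} [MeasurableSpace α] {μ : Measure α} {φ : α → E → ℝ}
    (hφ : ∀ᵐ s ∂μ, IsCondNegDefFun (φ s)) (hint : ∀ η, Integrable (fun s => φ s η) μ) :
    IsCondNegDefFun fun η => ∫ s, φ s η ∂μ := by
  refine ⟨?_, fun η => integral_congr_ae (hφ.mono fun s hs => hs.2.1 η), fun m x lam hlam => ?_⟩
  · simpa using integral_congr_ae (hφ.mono fun s hs => hs.1)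
  · have hint' : ∀ i j, Integrable (fun s => lam i * lam j * φ s (x i - x j)) μ :=
      fun i j => (hint _).const_mul _
    calc ∑ i, ∑ j, lam i * lam j * ∫ s, φ s (x i - x j) ∂μ
        = ∫ s, ∑ i, ∑ j, lam i * lam j * φ s (x i - x j) ∂μ := by
          rw [integral_finsetSum _ fun i _ => integrable_finsetSum _ fun j _ => hint' i j]
          simp only [integral_finsetSum _ fun j _ => hint' _ j, integral_const_mul]
      _ ≤ 0 := integral_nonpos_of_ae (hφ.mono fun s hs => hs.2.2 m x lam hlam)

end IsCondNegDefFun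

lemma abs_one_sub_exp_neg_mul_le {s l M : ℝ} (hs : 0 < s) (hl : 0 ≤ l) (hlM : l ≤ M) :
    |1 - Real.exp (-(s * l))| ≤ 2 * (1 + M) * (s / (1 + s)) := by
  have hexp_le : Real.exp (-(s * l)) ≤ 1 := Real.exp_le_one_iff.2 (by nlinarith)
  have hlin : 1 - Real.exp (-(s * l)) ≤ s * l := by linarith [Real.add_one_le_exp (-(s * l))]
  rw [abs_of_nonneg (by linarith), ← mul_div_assoc, le_div_iff₀ (by linarith)]
  rcases le_total s 1 with h | h <;>
    nlinarith [mul_le_mul_of_nonneg_left hlM hs.le, Real.exp_pos (-(s * l))]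

section

variable {μ : Measure ℝ}

lemma integrable_div_one_add
    (hμ : (∫⁻ s in Set.Ioi (0 : ℝ), ENNReal.ofReal (s / (1 + s)) ∂μ) < ⊤) :
    Integrable (fun s => s / (1 + s)) (μ.restrict (Set.Ioi 0)) := by
  refine ⟨(by fun_prop : Measurable fun s : ℝ => s / (1 + s)).aestronglyMeasurable,
    (hasFiniteIntegral_iff_ofReal ?_).2 hμ⟩
  filter_upwards [ae_restrict_mem measurableSet_Ioi] with s (hs : 0 < s)
  positivity

lemma integrable_one_sub_exp_neg_mul
    (hμ : (∫⁻ s in Set.Ioi (0 : ℝ), ENNReal.ofReal (s / (1 + s)) ∂μ) < ⊤)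
    {l : ℝ} (hl : 0 ≤ l) :
    Integrable (fun s => 1 - Real.exp (-(s * l))) (μ.restrict (Set.Ioi 0)) := by
  refine ((integrable_div_one_add hμ).const_mul (2 * (1 + l))).mono' (by fun_prop) ?_
  filter_upwards [ae_restrict_mem measurableSet_Ioi] with s hs
  exact abs_one_sub_exp_neg_mul_le hs hl le_rfl

end

namespace IsBernstein

variable {f : ℝ → ℝ}

lemma continuousOn (hf : IsBernstein f) : ContinuousOn f (Set.Ici 0) := by
  obtain ⟨b, μ, -, hμ, hf⟩ := hf
  intro l₀ hl₀
  refine ContinuousWithinAt.congr ?_ (fun l hl => hf l hl) (hf l₀ hl₀)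
  refine (continuousWithinAt_id.const_mul b).add (continuousWithinAt_of_dominated
    (bound := fun s => 2 * (1 + (l₀ + 1)) * (s / (1 + s))) ?_ ?_
    ((integrable_div_one_add hμ).const_mul _) (ae_of_all _ fun s => ?_))
  · exact Filter.Eventually.of_forall fun l => by fun_prop
  · filter_upwards [self_mem_nhdsWithin, nhdsWithin_le_nhds (gt_mem_nhds (lt_add_one l₀))]
      with l (hl : 0 ≤ l) hl'
    filter_upwards [ae_restrict_mem measurableSet_Ioi] with s hs
    exact abs_one_sub_exp_neg_mul_le hs hl hl'.le
  · exact (by fun_prop : Continuous fun l => 1 - Real.exp (-(s * l))).continuousWithinAt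

lemma isCondNegDefFun_comp {E : Type*} [AddCommGroup E] {γ : E → ℝ} (hf : IsBernstein f)
    (hγ : IsCondNegDefFun γ) (hγ0 : ∀ η, 0 ≤ γ η) : IsCondNegDefFun fun η => f (γ η) := by
  obtain ⟨b, μ, hb, hμ, hf⟩ := hf
  rw [funext fun η => hf (γ η) (hγ0 η)]
  refine (hγ.const_mul hb).add (IsCondNegDefFun.integral ?_ fun η =>
    integrable_one_sub_exp_neg_mul hμ (hγ0 η))
  filter_upwards [ae_restrict_mem measurableSet_Ioi] with s (hs : 0 < s)
  exact hγ.one_sub_exp_neg_mul hs.le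

end IsBernstein

/-- If `γ : ℝ^n → ℝ` is a continuous, nonnegative, conditionally negative definite function
and `f` is a Bernstein function, then `f ∘ γ` is a continuous conditionally negative
definite function. -/
theorem bernstein_comp_variogram (n : ℕ) (γ : EuclideanSpace ℝ (Fin n) → ℝ)
    (hγc : Continuous γ) (hγ : IsCondNegDefFun γ) (hγ0 : ∀ η, 0 ≤ γ η)
    (f : ℝ → ℝ) (hf : IsBernstein f) :
    Continuous (fun η => f (γ η)) ∧ IsCondNegDefFun (fun η => f (γ η)) :=
  ⟨hf.continuousOn.comp_continuous hγc hγ0, hf.isCondNegDefFun_comp hγ hγ0⟩
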